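/- Let Φ, R : X → [0,∞) and, for each N₁, N₂ ∈ ℕ, Φ_{N₁}, R_{N₂} : X → [0,∞) be Borel measurable. Assume: (a) for every r > 0 there is K(r) > 0, independent of N₁ and N₂, such that Φ(u), Φ_{N₁}(u), R(u), R_{N₂}(u) ≤ K(r) whenever ‖u‖_X < r; (b) μ₀({u : ‖u‖_X < r}) > 0 for every r > 0; (c) for every ε > 0 there exist sequences a_{N₁}(ε) → 0 and b_{N₂}(ε) → 0 of positive reals and a Borel set X_ε ⊆ X with μ₀(X_ε) ≥ 1 − ε such that |Φ(u) − Φ_{N₁}(u)| ≤ a_{N₁}(ε) and |R(u) − R_{N₂}(u)| ≤ b_{N₂}(ε) for all u ∈ X_ε and all N₁, N₂. Define μ by dμ/dμ₀ = Z^{−1} exp(−Φ − R) with Z = ∫_X exp(−Φ − R) dμ₀, and μ_{N₁,N₂} by dμ_{N₁,N₂}/dμ₀ = Z_{N₁,N₂}^{−1} exp(−Φ_{N₁} − R_{N₂}) with Z_{N₁,N₂} = ∫_X exp(−Φ_{N₁} − R_{N₂}) dμ₀. Then d_Hell(μ, μ_{N₁,N₂}) → 0 as N₁, N₂ → ∞.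 -/

import Mathlib

/-!
The potentials `G_N = Φ_{N₁} + R_{N₂}` converge to `F = Φ + R` uniformly off sets of small prior
measure, and on `[0, ∞)` the map `t ↦ exp (-t)` is `1`-Lipschitz and bounded by `1`. Hence the
normalising constants `Z(G_N)` and `Z((F + G_N) / 2)` both converge to `Z(F)`, which is positive
since `exp (-F) > 0`. The theorem follows from the identity
`d_Hell(μ_F, μ_G)² = 1 - Z((F + G) / 2) / √(Z(F) Z(G))`.
-/

open MeasureTheory

/-- Normalization constant `Z = ∫_X exp(−F(u)) dμ₀(u)` for a potential `F`. -/
noncomputable def ZConst {X : Type*} [MeasurableSpace X] (μ₀ : Measure X) (F : X → ℝ) : ℝ :=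
  ∫ u, Real.exp (-F u) ∂μ₀

/-- Density of the posterior measure with respect to `μ₀`: `Z⁻¹ exp(−F)`. -/
noncomputable def postDens {X : Type*} [MeasurableSpace X] (μ₀ : Measure X) (F : X → ℝ) :
    X → ℝ :=
  fun u => (ZConst μ₀ F)⁻¹ * Real.exp (-F u)

/-- Hellinger distance between two measures given by their densities `f = dμ/dμ₀`,
`g = dμ'/dμ₀` with respect to `μ₀`:
`d_Hell = (½ ∫ (√f − √g)² dμ₀)^{1/2}`. -/
noncomputable def hellingerDist {X : Type*} [MeasurableSpace X] (μ₀ : Measure X)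
    (f g : X → ℝ) : ℝ :=
  Real.sqrt ((1 / 2) * ∫ u, (Real.sqrt (f u) - Real.sqrt (g u)) ^ 2 ∂μ₀)

open Filter Topology
open scoped ENNReal

section AlmostUniform

variable {Ω ι β γ : Type*} [MeasurableSpace Ω] {μ : Measure Ω} {l : Filter ι}

def TendstoAlmostUniformly [PseudoMetricSpace β] (μ : Measure Ω) (f : ι → Ω → β) (g : Ω → β)
    (l : Filter ι) : Prop :=
  ∀ ε > (0 : ℝ), ∃ S, MeasurableSet S ∧ μ Sᶜ ≤ ENNReal.ofReal ε ∧ TendstoUniformlyOn f g l S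

theorem TendstoAlmostUniformly.of_dist_le [PseudoMetricSpace β] [PseudoMetricSpace γ]
    {f : ι → Ω → β} {g : Ω → β} {f' : ι → Ω → γ} {g' : Ω → γ}
    (h : TendstoAlmostUniformly μ f g l) (hle : ∀ i ω, dist (f' i ω) (g' ω) ≤ dist (f i ω) (g ω)) :
    TendstoAlmostUniformly μ f' g' l := by
  intro ε hε
  obtain ⟨S, hS, hμS, hfg⟩ := h ε hε
  refine ⟨S, hS, hμS, Metric.tendstoUniformlyOn_iff.2 fun δ hδ => ?_⟩
  filter_upwards [Metric.tendstoUniformlyOn_iff.1 hfg δ hδ] with i hi ω hω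
  rw [dist_comm]
  exact (hle i ω).trans_lt ((dist_comm _ _).trans_lt (hi ω hω))

theorem tendstoAlmostUniformly_of_dist_le_of_tendsto_zero [PseudoMetricSpace β]
    [IsProbabilityMeasure μ] {f : ι → Ω → β} {g : Ω → β}
    (h : ∀ ε > (0 : ℝ), ∃ (t : ι → ℝ) (S : Set Ω), MeasurableSet S ∧
      ENNReal.ofReal (1 - ε) ≤ μ S ∧ Tendsto t l (𝓝 0) ∧ ∀ i, ∀ ω ∈ S, dist (f i ω) (g ω) ≤ t i) :
    TendstoAlmostUniformly μ f g l := by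
  intro ε hε
  obtain ⟨t, S, hS, hμS, ht, hdist⟩ := h ε hε
  refine ⟨S, hS, ?_, Metric.tendstoUniformlyOn_iff.2 fun δ hδ => ?_⟩
  · rw [prob_compl_eq_one_sub hS, tsub_le_iff_right]
    calc (1 : ℝ≥0∞) = ENNReal.ofReal (ε + (1 - ε)) := by simp
      _ ≤ ENNReal.ofReal ε + μ S := ENNReal.ofReal_add_le.trans (by gcongr)
  · filter_upwards [ht.eventually (gt_mem_nhds hδ)] with i hi ω hω
    rw [dist_comm]
    exact (hdist i ω hω).trans_lt hi

theorem dist_integral_le_of_dist_le [IsFiniteMeasure μ] {f g : Ω → ℝ} (hf : Integrable f μ)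
    (hg : Integrable g μ) {S : Set Ω} (hS : MeasurableSet S) {η C : ℝ}
    (hη : ∀ ω ∈ S, dist (f ω) (g ω) ≤ η) (hC : ∀ ω, dist (f ω) (g ω) ≤ C) :
    dist (∫ ω, f ω ∂μ) (∫ ω, g ω ∂μ) ≤ η * μ.real S + C * μ.real Sᶜ := by
  rw [dist_eq_norm, ← integral_sub hf hg,
    ← integral_add_compl (f := fun ω => f ω - g ω) hS (hf.sub hg)]
  refine (norm_add_le _ _).trans (add_le_add ?_ ?_) <;>
    refine norm_setIntegral_le_of_norm_le_const (measure_lt_top _ _) fun ω hω => ?_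
  · exact hη ω hω
  · exact hC ω

theorem TendstoAlmostUniformly.tendsto_integral [IsFiniteMeasure μ] {f : ι → Ω → ℝ}
    {g : Ω → ℝ} {C : ℝ} (h : TendstoAlmostUniformly μ f g l) (hf : ∀ i, Integrable (f i) μ)
    (hg : Integrable g μ) (hC : ∀ i ω, dist (f i ω) (g ω) ≤ C) :
    Tendsto (fun i => ∫ ω, f i ω ∂μ) l (𝓝 (∫ ω, g ω ∂μ)) := by
  rw [Metric.tendsto_nhds]
  intro δ hδ
  set m := μ.real Set.univ
  obtain ⟨S, hS, hμS, hfg⟩ := h (δ / (2 * (|C| + 1))) (by positivity)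
  have hSc : μ.real Sᶜ ≤ δ / (2 * (|C| + 1)) :=
    ENNReal.toReal_le_of_le_ofReal (by positivity) hμS
  filter_upwards [Metric.tendstoUniformlyOn_iff.1 hfg (δ / (2 * (m + 1))) (by positivity)]
    with i hi
  have hbound := dist_integral_le_of_dist_le (hf i) hg hS
    (fun ω hω => (dist_comm _ _).trans_le (hi ω hω).le) (hC i)
  have hS_le : μ.real S ≤ m := measureReal_mono (Set.subset_univ S)
  calc _ ≤ δ / (2 * (m + 1)) * μ.real S + C * μ.real Sᶜ := hbound
    _ ≤ δ / (2 * (m + 1)) * m + |C| * (δ / (2 * (|C| + 1))) := by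
        gcongr
        exact le_abs_self C
    _ < δ := by
        have hm : 0 ≤ m := measureReal_nonneg
        rw [div_mul_eq_mul_div, mul_div_assoc', div_add_div _ _ (by positivity) (by positivity),
          div_lt_iff₀ (by positivity)]
        nlinarith [abs_nonneg C]

end AlmostUniform

section Posterior

variable {Ω ι : Type*} [MeasurableSpace Ω] {μ : Measure Ω} {l : Filter ι}

theorem dist_exp_neg_le_dist {a b : ℝ} (ha : 0 ≤ a) (hb : 0 ≤ b) :
    dist (Real.exp (-a)) (Real.exp (-b)) ≤ dist a b := by
  wlog hab : b ≤ a generalizing a b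
  · rw [dist_comm, dist_comm a]
    exact this hb ha (le_of_not_ge hab)
  rw [Real.dist_eq, Real.dist_eq, abs_sub_comm,
    abs_of_nonneg (sub_nonneg.2 (Real.exp_le_exp.2 (neg_le_neg hab))),
    abs_of_nonneg (sub_nonneg.2 hab)]
  -- `exp (-b) - exp (-a) = exp (-b) (1 - exp (b - a)) ≤ 1 - exp (b - a) ≤ a - b`
  have hexp : Real.exp (-a) = Real.exp (-b) * Real.exp (b - a) := by
    rw [← Real.exp_add]; ring_nf
  have hb1 : Real.exp (-b) ≤ 1 := Real.exp_le_one_iff.2 (neg_nonpos.2 hb)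
  have hba1 : Real.exp (b - a) ≤ 1 := Real.exp_le_one_iff.2 (sub_nonpos.2 hab)
  have := Real.add_one_le_exp (b - a)
  rw [hexp]
  nlinarith [mul_nonneg (sub_nonneg.2 hb1) (sub_nonneg.2 hba1)]

theorem dist_exp_neg_le_one {a b : ℝ} (ha : 0 ≤ a) (hb : 0 ≤ b) :
    dist (Real.exp (-a)) (Real.exp (-b)) ≤ 1 := by
  have ha1 : Real.exp (-a) ≤ 1 := Real.exp_le_one_iff.2 (neg_nonpos.2 ha)
  have hb1 : Real.exp (-b) ≤ 1 := Real.exp_le_one_iff.2 (neg_nonpos.2 hb)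
  rw [Real.dist_eq, abs_sub_le_iff]
  constructor <;> linarith [Real.exp_pos (-a), Real.exp_pos (-b)]

theorem integrable_exp_neg_of_nonneg [IsFiniteMeasure μ] {F : Ω → ℝ} (hF : Measurable F)
    (hF0 : ∀ ω, 0 ≤ F ω) : Integrable (fun ω => Real.exp (-F ω)) μ :=
  .of_bound hF.neg.exp.aestronglyMeasurable 1 <| .of_forall fun ω => by
    rw [Real.norm_of_nonneg (Real.exp_pos _).le]
    exact Real.exp_le_one_iff.2 (neg_nonpos.2 (hF0 ω))

theorem TendstoAlmostUniformly.tendsto_ZConst [IsFiniteMeasure μ] {F : Ω → ℝ}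
    {G : ι → Ω → ℝ} (h : TendstoAlmostUniformly μ G F l) (hF : Measurable F)
    (hG : ∀ i, Measurable (G i)) (hF0 : ∀ ω, 0 ≤ F ω) (hG0 : ∀ i ω, 0 ≤ G i ω) :
    Tendsto (fun i => ZConst μ (G i)) l (𝓝 (ZConst μ F)) :=
  (h.of_dist_le fun i ω => dist_exp_neg_le_dist (hG0 i ω) (hF0 ω)).tendsto_integral
    (fun i => integrable_exp_neg_of_nonneg (hG i) (hG0 i)) (integrable_exp_neg_of_nonneg hF hF0)
    fun i ω => dist_exp_neg_le_one (hG0 i ω) (hF0 ω)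

theorem sqrt_postDens (F : Ω → ℝ) (ω : Ω) :
    √(postDens μ F ω) = (√(ZConst μ F))⁻¹ * Real.exp (-F ω / 2) := by
  rw [postDens, Real.sqrt_mul' _ (Real.exp_pos _).le, Real.sqrt_inv, ← Real.exp_half]

/-- `1 - d_Hell²` is the Bhattacharyya coefficient `∫ √(dμ/dμ₀ · dμ'/dμ₀) dμ₀`. -/
theorem hellingerDist_postDens {F G : Ω → ℝ} (hF : Integrable (fun ω => Real.exp (-F ω)) μ)
    (hG : Integrable (fun ω => Real.exp (-G ω)) μ)
    (hFG : Integrable (fun ω => Real.exp (-((F ω + G ω) / 2))) μ)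
    (hZF : 0 < ZConst μ F) (hZG : 0 < ZConst μ G) :
    hellingerDist μ (postDens μ F) (postDens μ G) =
      √(1 - ZConst μ (fun ω => (F ω + G ω) / 2) / √(ZConst μ F * ZConst μ G)) := by
  have hpt : ∀ ω, (√(postDens μ F ω) - √(postDens μ G ω)) ^ 2 =
      (ZConst μ F)⁻¹ * Real.exp (-F ω) + (ZConst μ G)⁻¹ * Real.exp (-G ω)
        - 2 * (√(ZConst μ F * ZConst μ G))⁻¹ * Real.exp (-((F ω + G ω) / 2)) := by
    intro ω
    have hinv : ∀ {Z : ℝ}, 0 < Z → Z⁻¹ = (√Z)⁻¹ ^ 2 := fun hZ => by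
      rw [inv_pow, Real.sq_sqrt hZ.le]
    have hsq : ∀ x : ℝ, Real.exp x = Real.exp (x / 2) ^ 2 := fun x => by
      rw [sq, ← Real.exp_add, add_halves]
    rw [sqrt_postDens, sqrt_postDens, Real.sqrt_mul hZF.le, hinv hZF, hinv hZG, hsq (-F ω),
      hsq (-G ω), show -((F ω + G ω) / 2) = -F ω / 2 + -G ω / 2 by ring, Real.exp_add]
    ring
  have hZ : ∀ H : Ω → ℝ, ∫ ω, Real.exp (-H ω) ∂μ = ZConst μ H := fun _ => rfl
  rw [hellingerDist, integral_congr_ae (ae_of_all _ hpt), integral_sub ?_ (hFG.const_mul _),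
    integral_add (hF.const_mul _) (hG.const_mul _), integral_const_mul, integral_const_mul,
    integral_const_mul, hZ F, hZ G, hZ (fun ω => (F ω + G ω) / 2),
    inv_mul_cancel₀ hZF.ne', inv_mul_cancel₀ hZG.ne']
  · ring_nf
  · exact (hF.const_mul _).add (hG.const_mul _)

theorem TendstoAlmostUniformly.midpoint {F : Ω → ℝ} {G : ι → Ω → ℝ}
    (h : TendstoAlmostUniformly μ G F l) :
    TendstoAlmostUniformly μ (fun i ω => (F ω + G i ω) / 2) F l :=
  h.of_dist_le fun i ω => by
    rw [Real.dist_eq, Real.dist_eq, show (F ω + G i ω) / 2 - F ω = (G i ω - F ω) / 2 by ring,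
      abs_div, abs_two]
    linarith [abs_nonneg (G i ω - F ω)]

theorem TendstoAlmostUniformly.tendsto_hellingerDist_postDens [IsFiniteMeasure μ] [NeZero μ]
    {F : Ω → ℝ} {G : ι → Ω → ℝ} (h : TendstoAlmostUniformly μ G F l) (hF : Measurable F)
    (hG : ∀ i, Measurable (G i)) (hF0 : ∀ ω, 0 ≤ F ω) (hG0 : ∀ i ω, 0 ≤ G i ω) :
    Tendsto (fun i => hellingerDist μ (postDens μ F) (postDens μ (G i))) l (𝓝 0) := by
  have hM i : Measurable fun ω => (F ω + G i ω) / 2 := (hF.add (hG i)).div_const 2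
  have hM0 i ω : 0 ≤ (F ω + G i ω) / 2 := by linarith [hF0 ω, hG0 i ω]
  have hZG := h.tendsto_ZConst hF hG hF0 hG0
  have hZM := h.midpoint.tendsto_ZConst hF hM hF0 hM0
  have hZF : 0 < ZConst μ F := integral_exp_pos (integrable_exp_neg_of_nonneg hF hF0)
  refine Tendsto.congr (fun i => (hellingerDist_postDens (integrable_exp_neg_of_nonneg hF hF0)
    (integrable_exp_neg_of_nonneg (hG i) (hG0 i)) (integrable_exp_neg_of_nonneg (hM i) (hM0 i))
    hZF (integral_exp_pos (integrable_exp_neg_of_nonneg (hG i) (hG0 i)))).symm) ?_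
  have hlim : √(1 - ZConst μ F / √(ZConst μ F * ZConst μ F)) = 0 := by
    rw [Real.sqrt_mul_self hZF.le, div_self hZF.ne', sub_self, Real.sqrt_zero]
  rw [← hlim]
  exact ((hZM.div (tendsto_const_nhds.mul hZG).sqrt (by positivity)).const_sub 1).sqrt

end Posterior

theorem posterior_approximation_convergence_general
    {X : Type*} [MeasurableSpace X]
    (μ₀ : Measure X) [IsProbabilityMeasure μ₀]
    (Φ R : X → ℝ) (Φn Rn : ℕ → X → ℝ)
    (hΦm : Measurable Φ) (hRm : Measurable R)
    (hΦnm : ∀ N, Measurable (Φn N)) (hRnm : ∀ N, Measurable (Rn N))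
    (hΦ0 : ∀ u, 0 ≤ Φ u) (hR0 : ∀ u, 0 ≤ R u)
    (hΦn0 : ∀ N u, 0 ≤ Φn N u) (hRn0 : ∀ N u, 0 ≤ Rn N u)
    (hc : ∀ ε > (0 : ℝ), ∃ (aN bN : ℕ → ℝ) (Xe : Set X),
      MeasurableSet Xe ∧ (∀ N, 0 < aN N) ∧ (∀ N, 0 < bN N) ∧
      Filter.Tendsto aN Filter.atTop (nhds 0) ∧
      Filter.Tendsto bN Filter.atTop (nhds 0) ∧
      ENNReal.ofReal (1 - ε) ≤ μ₀ Xe ∧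
      ∀ u ∈ Xe, ∀ N₁ N₂ : ℕ, |Φ u - Φn N₁ u| ≤ aN N₁ ∧ |R u - Rn N₂ u| ≤ bN N₂) :
    Filter.Tendsto
      (fun N : ℕ × ℕ =>
        hellingerDist μ₀ (postDens μ₀ (fun u => Φ u + R u))
          (postDens μ₀ (fun u => Φn N.1 u + Rn N.2 u)))
      Filter.atTop (nhds 0) := by
  set F : X → ℝ := fun u => Φ u + R u
  set G : ℕ × ℕ → X → ℝ := fun N u => Φn N.1 u + Rn N.2 u
  have hGF : TendstoAlmostUniformly μ₀ G F atTop := by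
    refine tendstoAlmostUniformly_of_dist_le_of_tendsto_zero fun ε hε => ?_
    obtain ⟨aN, bN, Xe, hXe, -, -, haN, hbN, hμXe, hab⟩ := hc ε hε
    refine ⟨fun N => aN N.1 + bN N.2, Xe, hXe, hμXe, ?_, fun N u hu => ?_⟩
    · rw [← prod_atTop_atTop_eq]
      simpa using (haN.comp tendsto_fst).add (hbN.comp tendsto_snd)
    · rw [Real.dist_eq, abs_sub_comm, show F u - G N u = (Φ u - Φn N.1 u) + (R u - Rn N.2 u) by
        ring]
      exact (abs_add_le _ _).trans (add_le_add (hab u hu N.1 N.2).1 (hab u hu N.1 N.2).2)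
  exact hGF.tendsto_hellingerDist_postDens (hΦm.add hRm) (fun N => (hΦnm N.1).add (hRnm N.2))
    (fun u => add_nonneg (hΦ0 u) (hR0 u)) (fun N u => add_nonneg (hΦn0 N.1 u) (hRn0 N.2 u))

/-- convergence of the finite-dimensional approximations of the posterior
measure: under uniform bounds on balls and convergence of the approximated potentials on
sets of large prior measure, `d_Hell(μ, μ_{N₁,N₂}) → 0` as `N₁, N₂ → ∞`. -/
theorem posterior_approximation_convergence
    {X : Type*} [NormedAddCommGroup X] [InnerProductSpace ℝ X] [CompleteSpace X]
    [TopologicalSpace.SeparableSpace X] [MeasurableSpace X] [BorelSpace X]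
    (μ₀ : Measure X) [IsProbabilityMeasure μ₀]
    (Φ R : X → ℝ) (Φn Rn : ℕ → X → ℝ)
    (hΦm : Measurable Φ) (hRm : Measurable R)
    (hΦnm : ∀ N, Measurable (Φn N)) (hRnm : ∀ N, Measurable (Rn N))
    (hΦ0 : ∀ u, 0 ≤ Φ u) (hR0 : ∀ u, 0 ≤ R u)
    (hΦn0 : ∀ N u, 0 ≤ Φn N u) (hRn0 : ∀ N u, 0 ≤ Rn N u)
    (ha : ∀ r > (0 : ℝ), ∃ K > (0 : ℝ), ∀ u : X, ‖u‖ < r →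
      Φ u ≤ K ∧ R u ≤ K ∧ (∀ N₁, Φn N₁ u ≤ K) ∧ (∀ N₂, Rn N₂ u ≤ K))
    (hb : ∀ r > (0 : ℝ), 0 < μ₀ {u : X | ‖u‖ < r})
    (hc : ∀ ε > (0 : ℝ), ∃ (aN bN : ℕ → ℝ) (Xe : Set X),
      MeasurableSet Xe ∧ (∀ N, 0 < aN N) ∧ (∀ N, 0 < bN N) ∧
      Filter.Tendsto aN Filter.atTop (nhds 0) ∧
      Filter.Tendsto bN Filter.atTop (nhds 0) ∧
      ENNReal.ofReal (1 - ε) ≤ μ₀ Xe ∧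
      ∀ u ∈ Xe, ∀ N₁ N₂ : ℕ, |Φ u - Φn N₁ u| ≤ aN N₁ ∧ |R u - Rn N₂ u| ≤ bN N₂) :
    Filter.Tendsto
      (fun N : ℕ × ℕ =>
        hellingerDist μ₀ (postDens μ₀ (fun u => Φ u + R u))
          (postDens μ₀ (fun u => Φn N.1 u + Rn N.2 u)))
      Filter.atTop (nhds 0) :=
  posterior_approximation_convergence_general μ₀ Φ R Φn Rn hΦm hRm hΦnm hRnm hΦ0 hR0 hΦn0 hRn0 hc
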